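/- Let H be a two-local n-qubit Hamiltonian. Then H is a symmetric Z-matrix in the computational basis if and only if there is a decomposition H = Σ_{u<v} D_{uv} where each D_{uv} acts non-trivially only on qubits u and v and each D_{uv} is a symmetric Z-matrix. -/

import Mathlib

open Matrix

/-- `M` acts non-trivially only on qubits `u` and `v`: it is a two-qubit operator
on `u, v` tensored with the identity on the remaining qubits. -/
def ActsOn (n : ℕ) (u v : Fin n)
    (M : Matrix (Fin n → Fin 2) (Fin n → Fin 2) ℂ) : Prop :=
  ∃ A : Matrix (Fin 2 × Fin 2) (Fin 2 × Fin 2) ℂ, ∀ x y,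
    M x y = if ∀ w, w ≠ u → w ≠ v → x w = y w then A (x u, x v) (y u, y v) else 0

/-- A symmetric Z-matrix: real, symmetric, with non-positive off-diagonal entries. -/
def IsSymZ {ι : Type*} (M : Matrix ι ι ℂ) : Prop :=
  Mᵀ = M ∧ (∀ x y, (M x y).im = 0) ∧ (∀ x y, x ≠ y → (M x y).re ≤ 0)

open scoped Classical

namespace S12

variable {n : ℕ}

abbrev Mat (n : ℕ) := Matrix (Fin n → Fin 2) (Fin n → Fin 2) ℂ

noncomputable def Qs (s : Finset (Fin n)) (M : Mat n) : Mat n :=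
  fun x y => if (∀ w, w ∉ s → x w = y w)
    then M (fun w => if w ∈ s then x w else 0) (fun w => if w ∈ s then y w else 0) else 0

noncomputable def psi (A : Matrix (Fin 2 × Fin 2) (Fin 2 × Fin 2) ℂ)
    (a b : Fin n) (x y : Fin n → Fin 2) (sa sb : Prop) : ℂ :=
  if (∀ w, w ≠ a → w ≠ b → x w = y w) ∧ (sa ∨ x a = y a) ∧ (sb ∨ x b = y b)
  then A ((if sa then x a else 0), (if sb then x b else 0))
         ((if sa then y a else 0), (if sb then y b else 0)) else 0

lemma Qs_eq_psi {M : Mat n} {A : Matrix (Fin 2 × Fin 2) (Fin 2 × Fin 2) ℂ} {a b : Fin n}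
    (hA : ∀ x y, M x y = if ∀ w, w ≠ a → w ≠ b → x w = y w then A (x a, x b) (y a, y b) else 0)
    (s : Finset (Fin n)) (x y : Fin n → Fin 2) :
    Qs s M x y = psi A a b x y (a ∈ s) (b ∈ s) := by
  unfold Qs psi
  rw [hA]
  by_cases h1 : ∀ w, w ∉ s → x w = y w
  · rw [if_pos h1]
    by_cases h2 : ∀ w, w ≠ a → w ≠ b → (if w ∈ s then x w else 0) = (if w ∈ s then y w else 0)
    · have hC : (∀ w, w ≠ a → w ≠ b → x w = y w) ∧ (a ∈ s ∨ x a = y a) ∧ (b ∈ s ∨ x b = y b) := by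
        refine ⟨?_, ?_, ?_⟩
        · intro w hwa hwb
          by_cases hws : w ∈ s
          · have := h2 w hwa hwb; simpa [hws] using this
          · exact h1 w hws
        · by_cases has : a ∈ s
          · exact Or.inl has
          · exact Or.inr (h1 a has)
        · by_cases hbs : b ∈ s
          · exact Or.inl hbs
          · exact Or.inr (h1 b hbs)
      rw [if_pos h2, if_pos hC]
      congr!
    · have hC : ¬((∀ w, w ≠ a → w ≠ b → x w = y w) ∧ (a ∈ s ∨ x a = y a) ∧ (b ∈ s ∨ x b = y b)) := by
        rintro ⟨hb, -, -⟩
        apply h2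
        intro w hwa hwb
        by_cases hws : w ∈ s
        · simpa [hws] using hb w hwa hwb
        · simp [hws]
      rw [if_neg h2, if_neg hC]
  · have hC : ¬((∀ w, w ≠ a → w ≠ b → x w = y w) ∧ (a ∈ s ∨ x a = y a) ∧ (b ∈ s ∨ x b = y b)) := by
      rintro ⟨hb, ha2, hb2⟩
      apply h1
      intro w hws
      by_cases hwa : w = a
      · subst hwa
        rcases ha2 with h | h
        · exact absurd h hws
        · exact h
      · by_cases hwb : w = b
        · subst hwb
          rcases hb2 with h | h
          · exact absurd h hws
          · exact h
        · exact hb w hwa hwb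
    rw [if_neg h1, if_neg hC]

lemma lemB (ψ : Prop → Prop → ℂ) (a b : Fin n) (hab : a < b) :
    ((∑ u : Fin n, ∑ v ∈ Finset.univ.filter (fun v => u < v),
        (ψ (a = u ∨ a = v) (b = u ∨ b = v) - ψ (a = u) (b = u) - ψ (a = v) (b = v)
          + ψ False False))
      + ∑ u : Fin n, (ψ (a = u) (b = u) - ψ False False)) + ψ False False = ψ True True := by
  have hab' : a ≠ b := ne_of_lt hab
  have h1 : (∑ u : Fin n, ∑ v ∈ Finset.univ.filter (fun v => u < v),
        (ψ (a = u ∨ a = v) (b = u ∨ b = v) - ψ (a = u) (b = u) - ψ (a = v) (b = v)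
          + ψ False False))
      = ψ True True - ψ True False - ψ False True + ψ False False := by
    have key : ∀ u v : Fin n, u < v →
        (ψ (a = u ∨ a = v) (b = u ∨ b = v) - ψ (a = u) (b = u) - ψ (a = v) (b = v)
          + ψ False False)
        = if u = a ∧ v = b then ψ True True - ψ True False - ψ False True + ψ False False
          else 0 := by
      intro u v huv
      by_cases h1 : u = a
      · by_cases h2 : v = b
        · simp [h1, h2, hab', Ne.symm hab']
        · have hav : a ≠ v := ne_of_lt (h1 ▸ huv)
          have hbv : b ≠ v := fun h => h2 h.symm
          simp [h1, h2, hav, Ne.symm hav, hbv, Ne.symm hbv, Ne.symm hab', hab']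
          try ring
      · have hau : a ≠ u := fun h => h1 h.symm
        by_cases h3 : v = a
        · have hub : u ≠ b := ne_of_lt (huv.trans (h3 ▸ hab))
          simp [h3, h1, hau, Ne.symm hau, hub, Ne.symm hub, hab', Ne.symm hab']
          try ring
        · have hav : a ≠ v := fun h => h3 h.symm
          by_cases h4 : v = b
          · have hub : u ≠ b := ne_of_lt (h4 ▸ huv)
            simp [h4, h1, hau, Ne.symm hau, hub, Ne.symm hub, hab', Ne.symm hab']
            try ring
          · have hbv : b ≠ v := fun h => h4 h.symm
            by_cases h5 : u = b
            · simp [h5, h1, hau, Ne.symm hau, hav, Ne.symm hav, hbv, Ne.symm hbv,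
                hab', Ne.symm hab']
              try ring
            · have hbu : b ≠ u := fun h => h5 h.symm
              simp [h1, h3, h4, h5, hau, Ne.symm hau, hav, Ne.symm hav, hbv, hbu]
    rw [Finset.sum_congr rfl (fun u _ => Finset.sum_congr rfl
      (fun v hv => key u v (Finset.mem_filter.mp hv).2))]
    have h2 : ∀ u : Fin n, (∑ v ∈ Finset.univ.filter (fun v => u < v),
        if u = a ∧ v = b then ψ True True - ψ True False - ψ False True + ψ False False else 0)
        = if u = a then ψ True True - ψ True False - ψ False True + ψ False False else 0 := by
      intro u
      by_cases hu : u = a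
      · rw [if_pos hu]
        have hrw : ∀ v ∈ Finset.univ.filter (fun v => u < v),
            (if u = a ∧ v = b then ψ True True - ψ True False - ψ False True + ψ False False else 0)
            = if v = b then ψ True True - ψ True False - ψ False True + ψ False False else 0 := by
          intro v _
          by_cases hv : v = b <;> simp [hv, hu]
        rw [Finset.sum_congr rfl hrw, Finset.sum_ite_eq']
        rw [if_pos (by simp [Finset.mem_filter, hu ▸ hab])]
      · rw [if_neg hu]
        apply Finset.sum_eq_zero
        intro v _
        simp [hu]
    rw [Finset.sum_congr rfl (fun u _ => h2 u), Finset.sum_ite_eq']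
    simp
  have h3 : (∑ u : Fin n, (ψ (a = u) (b = u) - ψ False False))
      = (ψ True False - ψ False False) + (ψ False True - ψ False False) := by
    have key : ∀ u : Fin n, (ψ (a = u) (b = u) - ψ False False)
        = (if u = a then ψ True False - ψ False False else 0)
          + (if u = b then ψ False True - ψ False False else 0) := by
      intro u
      by_cases h1 : u = a
      · have hbu : b ≠ u := fun h => hab' (h1 ▸ h).symm
        have hub : u ≠ b := fun h => hbu h.symm
        simp [h1, hbu, hub, hab', Ne.symm hab']
      · by_cases h2 : u = b
        · have hau : a ≠ u := fun h => hab' (h2 ▸ h)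
          simp [h2, hau, h1, hab', Ne.symm hab']
        · have hau : a ≠ u := fun h => h1 h.symm
          have hbu : b ≠ u := fun h => h2 h.symm
          simp [hau, hbu, h1, h2]
    rw [Finset.sum_congr rfl (fun u _ => key u), Finset.sum_add_distrib,
      Finset.sum_ite_eq', Finset.sum_ite_eq']
    simp
  rw [h1, h3]
  ring

lemma perTerm {M : Mat n} {a b : Fin n} (hab : a < b)
    (hM : ActsOn n a b M) (x y : Fin n → Fin 2) :
    ((∑ u : Fin n, ∑ v ∈ Finset.univ.filter (fun v => u < v),
       (Qs {u,v} M x y - Qs {u} M x y - Qs {v} M x y + Qs ∅ M x y))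
     + ∑ u : Fin n, (Qs {u} M x y - Qs ∅ M x y)) + Qs ∅ M x y = M x y := by
  obtain ⟨A, hA⟩ := hM
  have hq : ∀ s : Finset (Fin n), Qs s M x y = psi A a b x y (a ∈ s) (b ∈ s) :=
    fun s => Qs_eq_psi hA s x y
  simp only [hq]
  simp only [Finset.mem_insert, Finset.mem_singleton, Finset.notMem_empty]
  rw [lemB (psi A a b x y) a b hab]
  rw [hA x y]
  unfold psi
  simp

lemma Qs_add_apply (s : Finset (Fin n)) (M N : Mat n) (x y : Fin n → Fin 2) :
    Qs s (M + N) x y = Qs s M x y + Qs s N x y := by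
  unfold Qs
  split_ifs with h
  · simp [Matrix.add_apply]
  · simp

noncomputable def qsE (s : Finset (Fin n)) (x y : Fin n → Fin 2) : Mat n →+ ℂ :=
  AddMonoidHom.mk' (fun M => Qs s M x y) (fun M N => Qs_add_apply s M N x y)

noncomputable def evE (x y : Fin n → Fin 2) : Mat n →+ ℂ :=
  AddMonoidHom.mk' (fun M => M x y) (fun M N => rfl)

lemma hom_pairsum (φ : Mat n →+ ℂ) (F : Fin n → Fin n → Mat n) :
    φ (∑ p : Fin n, ∑ q ∈ Finset.univ.filter (fun q => p < q), F p q)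
      = ∑ p : Fin n, ∑ q ∈ Finset.univ.filter (fun q => p < q), φ (F p q) := by
  rw [map_sum]
  exact Finset.sum_congr rfl fun p _ => map_sum φ _ _

noncomputable def phiM (x y : Fin n → Fin 2) : Mat n →+ ℂ :=
  ((∑ u : Fin n, ∑ v ∈ Finset.univ.filter (fun v => u < v),
      (qsE {u,v} x y - qsE {u} x y - qsE {v} x y + qsE ∅ x y))
    + ∑ u : Fin n, (qsE {u} x y - qsE ∅ x y)) + qsE ∅ x y

lemma phiM_apply (x y : Fin n → Fin 2) (M : Mat n) :
    phiM x y M = ((∑ u : Fin n, ∑ v ∈ Finset.univ.filter (fun v => u < v),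
      (Qs {u,v} M x y - Qs {u} M x y - Qs {v} M x y + Qs ∅ M x y))
    + ∑ u : Fin n, (Qs {u} M x y - Qs ∅ M x y)) + Qs ∅ M x y := by
  simp [phiM, qsE, AddMonoidHom.finset_sum_apply]

lemma mobius {D : Fin n → Fin n → Mat n} (hD : ∀ u v, ActsOn n u v (D u v))
    (H : Mat n)
    (hdec : H = ∑ p : Fin n, ∑ q ∈ Finset.univ.filter (fun q => p < q), D p q)
    (x y : Fin n → Fin 2) :
    ((∑ u : Fin n, ∑ v ∈ Finset.univ.filter (fun v => u < v),
      (Qs {u,v} H x y - Qs {u} H x y - Qs {v} H x y + Qs ∅ H x y))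
    + ∑ u : Fin n, (Qs {u} H x y - Qs ∅ H x y)) + Qs ∅ H x y = H x y := by
  rw [← phiM_apply]
  conv_lhs => rw [hdec]
  rw [hom_pairsum]
  conv_rhs => rw [hdec]
  rw [show (∑ p : Fin n, ∑ q ∈ Finset.univ.filter (fun q => p < q), D p q) x y
      = ∑ p : Fin n, ∑ q ∈ Finset.univ.filter (fun q => p < q), D p q x y by
    simp [Matrix.sum_apply]]
  refine Finset.sum_congr rfl fun p _ => Finset.sum_congr rfl fun q hq => ?_
  have hpq : p < q := (Finset.mem_filter.mp hq).2
  rw [phiM_apply]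
  exact perTerm hpq (hD p q) x y

lemma linePerTerm {M : Mat n} {p q : Fin n} (hpq : p < q) (hM : ActsOn n p q M)
    (u : Fin n) (x y : Fin n → Fin 2) (hagree : ∀ w, w ≠ u → x w = y w) (hu : x u ≠ y u) :
    ∑ w ∈ Finset.univ.erase u, Qs {u,w} M x y
      = M x y + ((n - 2 : ℕ) : ℂ) * Qs {u} M x y := by
  obtain ⟨A, hA⟩ := hM
  have hpq' : p ≠ q := ne_of_lt hpq
  have hQg : ∀ s : Finset (Fin n), u ∈ s → Qs s M x y
      = M (fun w => if w ∈ s then x w else 0) (fun w => if w ∈ s then y w else 0) := by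
    intro s hus
    unfold Qs
    rw [if_pos]
    intro w hws
    exact hagree w (fun h => hws (h ▸ hus))
  have hcard : ∀ z : Fin n, z ≠ u → ((Finset.univ.erase u).erase z).card = n - 2 := by
    intro z hz
    rw [Finset.card_erase_of_mem (Finset.mem_erase.mpr ⟨hz, Finset.mem_univ z⟩),
      Finset.card_erase_of_mem (Finset.mem_univ u), Finset.card_univ, Fintype.card_fin]
    omega
  by_cases hup : u = p
  · subst hup
    have hqp : q ≠ u := fun h => hpq' h.symm
    have hq_mem : q ∈ Finset.univ.erase u := Finset.mem_erase.mpr ⟨hqp, Finset.mem_univ q⟩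
    have hMxy : M x y = A (x u, x q) (y u, y q) := by
      rw [hA]; exact if_pos (fun w hwp _ => hagree w hwp)
    have hQ1 : Qs {u} M x y = A (x u, 0) (y u, 0) := by
      rw [hQg {u} (by simp), hA, if_pos ?_]
      · simp [hqp]
      · intro w hwp hwq
        simp [Finset.mem_singleton, hwp]
    have hvq : Qs {u,q} M x y = A (x u, x q) (y u, y q) := by
      rw [hQg _ (by simp), hA, if_pos ?_]
      · simp
      · intro w hwp hwq
        simp [Finset.mem_insert, Finset.mem_singleton, hwp, hwq]
    have hvother : ∀ w ∈ (Finset.univ.erase u).erase q, Qs {u,w} M x y = A (x u, 0) (y u, 0) := by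
      intro w hw
      have hwq : w ≠ q := (Finset.mem_erase.mp hw).1
      have hwp : w ≠ u := (Finset.mem_erase.mp (Finset.mem_erase.mp hw).2).1
      rw [hQg _ (by simp), hA, if_pos ?_]
      · have hq2 : q ∉ ({u,w} : Finset (Fin n)) := by simp [hqp, Ne.symm hwq]
        simp [hq2]
      · intro w' hw'p hw'q
        by_cases hww : w' = w
        · subst hww; simp [hagree w' hw'p]
        · simp [Finset.mem_insert, Finset.mem_singleton, hw'p, hww]
    rw [← Finset.add_sum_erase _ _ hq_mem, hvq, Finset.sum_congr rfl hvother, Finset.sum_const,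
      hMxy, hQ1, hcard q hqp, nsmul_eq_mul]
  · by_cases huq : u = q
    · subst huq
      have hpu : p ≠ u := hpq'
      have hp_mem : p ∈ Finset.univ.erase u := Finset.mem_erase.mpr ⟨hpu, Finset.mem_univ p⟩
      have hMxy : M x y = A (x p, x u) (y p, y u) := by
        rw [hA]; exact if_pos (fun w _ hwq => hagree w hwq)
      have hQ1 : Qs {u} M x y = A (0, x u) (0, y u) := by
        rw [hQg {u} (by simp), hA, if_pos ?_]
        · simp [hpu]
        · intro w hwp hwq
          simp [Finset.mem_singleton, hwq]
      have hvp : Qs {u,p} M x y = A (x p, x u) (y p, y u) := by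
        rw [hQg _ (by simp), hA, if_pos ?_]
        · simp
        · intro w hwp hwq
          simp [Finset.mem_insert, Finset.mem_singleton, hwp, hwq]
      have hvother : ∀ w ∈ (Finset.univ.erase u).erase p, Qs {u,w} M x y = A (0, x u) (0, y u) := by
        intro w hw
        have hwp : w ≠ p := (Finset.mem_erase.mp hw).1
        have hwu : w ≠ u := (Finset.mem_erase.mp (Finset.mem_erase.mp hw).2).1
        rw [hQg _ (by simp), hA, if_pos ?_]
        · have hp2 : p ∉ ({u,w} : Finset (Fin n)) := by simp [hpu, Ne.symm hwp]
          simp [hp2]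
        · intro w' hw'p hw'q
          by_cases hww : w' = w
          · subst hww; simp [hagree w' hw'q]
          · simp [Finset.mem_insert, Finset.mem_singleton, hw'q, hww]
      rw [← Finset.add_sum_erase _ _ hp_mem, hvp, Finset.sum_congr rfl hvother, Finset.sum_const,
        hMxy, hQ1, hcard p hpu, nsmul_eq_mul]
    · have h0 : M x y = 0 := by
        rw [hA]; exact if_neg (fun hc => hu (hc u hup huq))
      have h1 : Qs {u} M x y = 0 := by
        rw [hQg _ (by simp), hA]
        apply if_neg
        intro hc
        have := hc u hup huq
        simp at this
        exact hu this
      have h2 : ∀ w ∈ Finset.univ.erase u, Qs {u,w} M x y = 0 := by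
        intro w _
        rw [hQg _ (by simp), hA]
        apply if_neg
        intro hc
        have := hc u hup huq
        simp at this
        exact hu this
      rw [Finset.sum_congr rfl h2, h0, h1]
      simp

noncomputable def phiL (u : Fin n) (x y : Fin n → Fin 2) : Mat n →+ ℂ :=
  (∑ w ∈ Finset.univ.erase u, qsE {u,w} x y) - (evE x y + (n - 2) • qsE {u} x y)

lemma line_identity {D : Fin n → Fin n → Mat n} (hD : ∀ p q, ActsOn n p q (D p q))
    (H : Mat n)
    (hdec : H = ∑ p : Fin n, ∑ q ∈ Finset.univ.filter (fun q => p < q), D p q)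
    (u : Fin n) (x y : Fin n → Fin 2)
    (hagree : ∀ w, w ≠ u → x w = y w) (hu : x u ≠ y u) :
    ∑ w ∈ Finset.univ.erase u, Qs {u,w} H x y
      = H x y + ((n - 2 : ℕ) : ℂ) * Qs {u} H x y := by
  have happ : ∀ M : Mat n, phiL u x y M
      = (∑ w ∈ Finset.univ.erase u, Qs {u,w} M x y)
        - (M x y + ((n - 2 : ℕ) : ℂ) * Qs {u} M x y) := by
    intro M
    simp [phiL, qsE, evE, AddMonoidHom.finset_sum_apply, nsmul_eq_mul]
    rfl
  have h0 : phiL u x y H = 0 := by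
    rw [hdec, hom_pairsum]
    apply Finset.sum_eq_zero
    intro p _
    apply Finset.sum_eq_zero
    intro q hq
    rw [happ, sub_eq_zero]
    exact linePerTerm (Finset.mem_filter.mp hq).2 (hD p q) u x y hagree hu
  rw [happ] at h0
  exact sub_eq_zero.mp h0

noncomputable def fv (H : Mat n) (u v : Fin n) (a c t : Fin 2) : ℝ :=
  (H (fun w => if w = u then a else if w = v then t else 0)
     (fun w => if w = u then c else if w = v then t else 0)).re

noncomputable def mv (H : Mat n) (u v : Fin n) (a c : Fin 2) : ℝ :=
  max (fv H u v a c 0) (fv H u v a c 1)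

noncomputable def c0 (H : Mat n) (u : Fin n) (a c : Fin 2) : ℝ :=
  (H (fun w => if w = u then a else 0) (fun w => if w = u then c else 0)).re

lemma fv_le_mv (H : Mat n) (u v : Fin n) (a c : Fin 2) (t : Fin 2) :
    fv H u v a c t ≤ mv H u v a c := by
  fin_cases t
  · exact le_max_left _ _
  · exact le_max_right _ _

lemma paste_pair (u v : Fin n) (x : Fin n → Fin 2) :
    (fun w => if w ∈ ({u,v} : Finset (Fin n)) then x w else 0)
      = (fun w => if w = u then x u else if w = v then x v else 0) := by
  funext w
  by_cases h1 : w = u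
  · subst h1; simp
  · by_cases h2 : w = v
    · subst h2; simp [h1]
    · simp [h1, h2]

lemma paste_single (u : Fin n) (x : Fin n → Fin 2) :
    (fun w => if w ∈ ({u} : Finset (Fin n)) then x w else 0)
      = (fun w => if w = u then x u else 0) := by
  funext w
  by_cases h1 : w = u
  · subst h1; simp
  · simp [h1]

lemma pud_swap (u v : Fin n) (huv : u ≠ v) (a t : Fin 2) :
    (fun w => if w = v then a else if w = u then t else 0)
      = (fun w => if w = u then t else if w = v then a else 0) := by
  funext w
  by_cases h1 : w = u
  · subst h1; simp [huv]
  · by_cases h2 : w = v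
    · subst h2; simp [h1]
    · simp [h1, h2]

lemma slack_le {D : Fin n → Fin n → Mat n} (hD : ∀ p q, ActsOn n p q (D p q))
    (H : Mat n)
    (hdec : H = ∑ p : Fin n, ∑ q ∈ Finset.univ.filter (fun q => p < q), D p q)
    (hZ : IsSymZ H) (u : Fin n) (a c : Fin 2) (hac : a ≠ c) :
    (∑ w ∈ Finset.univ.erase u, mv H u w a c) ≤ (n - 2 : ℕ) * c0 H u a c := by
  set ts : Fin n → Fin 2 := fun w => if fv H u w a c 0 ≤ fv H u w a c 1 then 1 else 0 with hts
  set xs : Fin n → Fin 2 := fun w => if w = u then a else ts w with hxs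
  set ys : Fin n → Fin 2 := fun w => if w = u then c else ts w with hys
  have hagree : ∀ w, w ≠ u → xs w = ys w := by
    intro w hw; simp [hxs, hys, hw]
  have hu : xs u ≠ ys u := by simpa [hxs, hys] using hac
  have hne : xs ≠ ys := fun h => hu (congrFun h u)
  have hre : (H xs ys).re ≤ 0 := hZ.2.2 xs ys hne
  have hline := line_identity hD H hdec u xs ys hagree hu
  have e1 : ∀ w ∈ Finset.univ.erase u, (Qs {u,w} H xs ys).re = mv H u w a c := by
    intro w hw
    have hwu : w ≠ u := (Finset.mem_erase.mp hw).1
    have hguard : ∀ w', w' ∉ ({u,w} : Finset (Fin n)) → xs w' = ys w' := by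
      intro w' hw'
      apply hagree
      intro h; exact hw' (by simp [h])
    unfold Qs
    rw [if_pos hguard, paste_pair, paste_pair]
    have hx : (fun w' => if w' = u then xs u else if w' = w then xs w else 0)
        = (fun w' => if w' = u then a else if w' = w then ts w else 0) := by
      funext w'
      by_cases h1 : w' = u
      · simp [h1, hxs]
      · by_cases h2 : w' = w
        · simp [h1, h2, hxs, hwu]
        · simp [h1, h2]
    have hy : (fun w' => if w' = u then ys u else if w' = w then ys w else 0)
        = (fun w' => if w' = u then c else if w' = w then ts w else 0) := by
      funext w'
      by_cases h1 : w' = u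
      · simp [h1, hys]
      · by_cases h2 : w' = w
        · simp [h1, h2, hys, hwu]
        · simp [h1, h2]
    rw [hx, hy]
    show fv H u w a c (ts w) = mv H u w a c
    by_cases hcmp : fv H u w a c 0 ≤ fv H u w a c 1
    · simp only [hts]
      rw [if_pos hcmp]
      exact (max_eq_right hcmp).symm
    · simp only [hts]
      rw [if_neg hcmp]
      exact (max_eq_left (le_of_not_ge hcmp)).symm
  have e2 : (Qs {u} H xs ys).re = c0 H u a c := by
    have hguard : ∀ w', w' ∉ ({u} : Finset (Fin n)) → xs w' = ys w' := by
      intro w' hw'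
      exact hagree w' (by simpa using hw')
    unfold Qs
    rw [if_pos hguard, paste_single, paste_single]
    have hx : (fun w' => if w' = u then xs u else 0) = (fun w' => if w' = u then a else 0) := by
      funext w'; by_cases h1 : w' = u <;> simp [h1, hxs]
    have hy : (fun w' => if w' = u then ys u else 0) = (fun w' => if w' = u then c else 0) := by
      funext w'; by_cases h1 : w' = u <;> simp [h1, hys]
    rw [hx, hy]
    rfl
  have hsumre : (∑ w ∈ Finset.univ.erase u, Qs {u,w} H xs ys).re
      = ∑ w ∈ Finset.univ.erase u, mv H u w a c := by
    rw [Complex.re_sum]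
    exact Finset.sum_congr rfl e1
  rw [hline] at hsumre
  have : ((H xs ys) + ((n - 2 : ℕ) : ℂ) * Qs {u} H xs ys).re
      = (H xs ys).re + ((n - 2 : ℕ) : ℝ) * c0 H u a c := by
    simp [Complex.add_re, Complex.mul_re, e2]
  rw [this] at hsumre
  rw [← hsumre]
  linarith

noncomputable def w0 {m : ℕ} (u : Fin (m+2)) : Fin (m+2) := if u = 0 then 1 else 0

noncomputable def corr {m : ℕ} (H : Mat (m+2)) (u v : Fin (m+2)) (a c : Fin 2) : ℝ :=
  (c0 H u a c - mv H u v a c) +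
    (if v = w0 u then (∑ w ∈ Finset.univ.erase u, (mv H u w a c - c0 H u a c)) else 0)

noncomputable def Kc {m : ℕ} (H : Mat (m+2)) (u v : Fin (m+2)) : Mat (m+2) :=
  fun x y => if (∀ w, w ≠ u → w ≠ v → x w = y w) ∧ x u ≠ y u ∧ x v = y v
    then (corr H u v (x u) (y u) : ℂ) else 0

noncomputable def DP {m : ℕ} (H : Mat (m+2)) (u v : Fin (m+2)) : Mat (m+2) :=
  (Qs {u,v} H - Qs {u} H - Qs {v} H + Qs ∅ H)
  + (if u = 0 then Qs {v} H - Qs ∅ H else 0)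
  + (if u = 0 ∧ v = 1 then Qs {u} H else 0)

noncomputable def EE {m : ℕ} (H : Mat (m+2)) (u v : Fin (m+2)) : Mat (m+2) :=
  DP H u v + Kc H u v + Kc H v u

noncomputable def Dfin {m : ℕ} (H : Mat (m+2)) (u v : Fin (m+2)) : Mat (m+2) :=
  fun x y => (((EE H u v x y).re + (EE H u v y x).re) / 2 : ℝ)

lemma EE_apply {m : ℕ} (H : Mat (m+2)) (u v : Fin (m+2)) (x y : Fin (m+2) → Fin 2) :
    EE H u v x y = (Qs {u,v} H x y - Qs {u} H x y - Qs {v} H x y + Qs ∅ H x y)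
      + (if u = 0 then Qs {v} H x y - Qs ∅ H x y else 0)
      + (if u = 0 ∧ v = 1 then Qs {u} H x y else 0)
      + Kc H u v x y + Kc H v u x y := by
  show (DP H u v + Kc H u v + Kc H v u) x y = _
  simp only [Matrix.add_apply, DP, Matrix.sub_apply,
    apply_ite (fun N : Mat (m+2) => N x y), Matrix.zero_apply]

lemma Ere_nonpos {m : ℕ} {D : Fin (m+2) → Fin (m+2) → Mat (m+2)}
    (hD : ∀ p q, ActsOn (m+2) p q (D p q)) (H : Mat (m+2))
    (hdec : H = ∑ p : Fin (m+2), ∑ q ∈ Finset.univ.filter (fun q => p < q), D p q)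
    (hZ : IsSymZ H) (u v : Fin (m+2)) (huv : u < v)
    (x y : Fin (m+2) → Fin 2) (hxy : x ≠ y) :
    (EE H u v x y).re ≤ 0 := by
  have huvne : u ≠ v := ne_of_lt huv
  have hv0 : v ≠ 0 := by
    intro h
    rw [h] at huv
    exact absurd huv (Fin.not_lt_zero u)
  have hreal : ∀ a b, ((H a b).re : ℂ) = H a b := fun a b =>
    Complex.ext (Complex.ofReal_re _) (by rw [Complex.ofReal_im, hZ.2.1 a b])
  have hcard1 : (Finset.univ.erase u).card = m + 1 := by
    rw [Finset.card_erase_of_mem (Finset.mem_univ u), Finset.card_univ, Fintype.card_fin]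
    omega
  have hcardv : (Finset.univ.erase v).card = m + 1 := by
    rw [Finset.card_erase_of_mem (Finset.mem_univ v), Finset.card_univ, Fintype.card_fin]
    omega
  have hm2 : ((m + 2 - 2 : ℕ) : ℝ) = (m : ℝ) := by norm_num
  by_cases hbase : ∀ w, w ≠ u → w ≠ v → x w = y w
  · have q2 : Qs {u,v} H x y
        = H (fun w => if w = u then x u else if w = v then x v else 0)
            (fun w => if w = u then y u else if w = v then y v else 0) := by
      unfold Qs
      rw [if_pos, paste_pair, paste_pair]
      intro w hw
      simp only [Finset.mem_insert, Finset.mem_singleton, not_or] at hw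
      exact hbase w hw.1 hw.2
    by_cases hu : x u = y u
    · by_cases hv : x v = y v
      · exfalso
        apply hxy
        funext w
        by_cases h1 : w = u
        · rw [h1]; exact hu
        · by_cases h2 : w = v
          · rw [h2]; exact hv
          · exact hbase w h1 h2
      · -- case (iii) : differ at v only
        have zu : Qs {u} H x y = 0 := by
          unfold Qs
          apply if_neg
          intro h
          exact hv (h v (by simp [Ne.symm huvne]))
        have z0 : Qs ∅ H x y = 0 := by
          unfold Qs
          apply if_neg
          intro h
          exact hv (h v (by simp))
        have q1v : Qs {v} H x y = ((c0 H v (x v) (y v) : ℝ) : ℂ) := by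
          unfold Qs
          rw [if_pos, paste_single, paste_single]
          · rw [← hreal]
            rfl
          · intro w hw
            simp only [Finset.mem_singleton] at hw
            by_cases h1 : w = u
            · rw [h1]; exact hu
            · exact hbase w h1 hw
        have q2v : Qs {u,v} H x y = ((fv H v u (x v) (y v) (x u) : ℝ) : ℂ) := by
          have ex : (fun w => if w = u then x u else if w = v then x v else 0)
              = (fun w => if w = v then x v else if w = u then x u else 0) :=
            (pud_swap u v huvne (x v) (x u)).symm
          have ey : (fun w => if w = u then y u else if w = v then y v else 0)
              = (fun w => if w = v then y v else if w = u then x u else 0) := by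
            funext w
            by_cases h1 : w = u
            · simp [h1, huvne, ← hu]
            · by_cases h2 : w = v
              · simp [h1, h2, Ne.symm huvne]
              · simp [h1, h2]
          rw [q2, ex, ey, ← hreal]
          rfl
        have kuv : Kc H u v x y = 0 := by
          unfold Kc
          exact if_neg (fun h => h.2.1 hu)
        have kvu : Kc H v u x y = ((corr H v u (x v) (y v) : ℝ) : ℂ) := by
          unfold Kc
          exact if_pos ⟨fun w h1 h2 => hbase w h2 h1, hv, hu⟩
        rw [EE_apply, q2v, q1v, zu, z0, kuv, kvu, ite_self]
        have hw0v : w0 v = 0 := by simp [w0, hv0]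
        have hslack := slack_le hD H hdec hZ v (x v) (y v) hv
        have hfle := fv_le_mv H v u (x v) (y v) (x u)
        rw [hm2] at hslack
        have hsplit : ∑ w ∈ Finset.univ.erase v, (mv H v w (x v) (y v) - c0 H v (x v) (y v))
            = (∑ w ∈ Finset.univ.erase v, mv H v w (x v) (y v))
              - (m + 1 : ℝ) * c0 H v (x v) (y v) := by
          rw [Finset.sum_sub_distrib, Finset.sum_const, hcardv, nsmul_eq_mul]
          push_cast
          ring
        by_cases hu0 : u = 0
        · rw [if_pos hu0]
          unfold corr
          rw [hw0v, if_pos hu0, hsplit]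
          simp only [Complex.sub_re, Complex.add_re, Complex.zero_re, Complex.ofReal_re]
          linarith
        · rw [if_neg hu0]
          unfold corr
          rw [hw0v, if_neg hu0]
          simp only [Complex.sub_re, Complex.add_re, Complex.zero_re, Complex.ofReal_re]
          linarith
    · by_cases hv : x v = y v
      · -- case (ii) : differ at u only
        have zv : Qs {v} H x y = 0 := by
          unfold Qs
          apply if_neg
          intro h
          exact hu (h u (by simp [huvne]))
        have z0 : Qs ∅ H x y = 0 := by
          unfold Qs
          apply if_neg
          intro h
          exact hu (h u (by simp))
        have q1u : Qs {u} H x y = ((c0 H u (x u) (y u) : ℝ) : ℂ) := by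
          unfold Qs
          rw [if_pos, paste_single, paste_single]
          · rw [← hreal]
            rfl
          · intro w hw
            simp only [Finset.mem_singleton] at hw
            by_cases h2 : w = v
            · rw [h2]; exact hv
            · exact hbase w hw h2
        have q2v : Qs {u,v} H x y = ((fv H u v (x u) (y u) (x v) : ℝ) : ℂ) := by
          have ey : (fun w => if w = u then y u else if w = v then y v else 0)
              = (fun w => if w = u then y u else if w = v then x v else 0) := by
            funext w
            by_cases h1 : w = u
            · simp [h1]
            · by_cases h2 : w = v
              · simp [h1, h2, ← hv]
              · simp [h1, h2]
          rw [q2, ey, ← hreal]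
          rfl
        have kuv : Kc H u v x y = ((corr H u v (x u) (y u) : ℝ) : ℂ) := by
          unfold Kc
          exact if_pos ⟨hbase, hu, hv⟩
        have kvu : Kc H v u x y = 0 := by
          unfold Kc
          exact if_neg (fun h => h.2.1 hv)
        rw [EE_apply, q2v, q1u, zv, z0, kuv, kvu]
        have hslack := slack_le hD H hdec hZ u (x u) (y u) hu
        have hfle := fv_le_mv H u v (x u) (y u) (x v)
        rw [hm2] at hslack
        have hsplit : ∑ w ∈ Finset.univ.erase u, (mv H u w (x u) (y u) - c0 H u (x u) (y u))
            = (∑ w ∈ Finset.univ.erase u, mv H u w (x u) (y u))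
              - (m + 1 : ℝ) * c0 H u (x u) (y u) := by
          rw [Finset.sum_sub_distrib, Finset.sum_const, hcard1, nsmul_eq_mul]
          push_cast
          ring
        by_cases hu0 : u = 0
        · have hw0u : w0 u = 1 := by simp [w0, hu0]
          by_cases hv1 : v = 1
          · rw [if_pos hu0, if_pos ⟨hu0, hv1⟩]
            unfold corr
            rw [hw0u, if_pos hv1, hsplit]
            simp only [Complex.sub_re, Complex.add_re, Complex.zero_re, Complex.ofReal_re]
            linarith
          · rw [if_pos hu0, if_neg (fun h : u = 0 ∧ v = 1 => hv1 h.2)]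
            unfold corr
            rw [hw0u, if_neg hv1]
            simp only [Complex.sub_re, Complex.add_re, Complex.zero_re, Complex.ofReal_re]
            linarith
        · have hw0u : w0 u = 0 := by simp [w0, hu0]
          rw [if_neg hu0, if_neg (fun h : u = 0 ∧ v = 1 => hu0 h.1)]
          unfold corr
          rw [hw0u, if_neg hv0]
          simp only [Complex.sub_re, Complex.add_re, Complex.zero_re, Complex.ofReal_re]
          linarith
      · -- case (i) : differ at both u and v
        have zu : Qs {u} H x y = 0 := by
          unfold Qs
          apply if_neg
          intro h
          exact hv (h v (by simp [Ne.symm huvne]))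
        have zv : Qs {v} H x y = 0 := by
          unfold Qs
          apply if_neg
          intro h
          exact hu (h u (by simp [huvne]))
        have z0 : Qs ∅ H x y = 0 := by
          unfold Qs
          apply if_neg
          intro h
          exact hu (h u (by simp))
        have kuv : Kc H u v x y = 0 := by
          unfold Kc
          exact if_neg (fun h => hv h.2.2)
        have kvu : Kc H v u x y = 0 := by
          unfold Kc
          exact if_neg (fun h => hu h.2.2)
        rw [EE_apply, zu, zv, z0, kuv, kvu, ite_self]
        have hoff : (H (fun w => if w = u then x u else if w = v then x v else 0)
            (fun w => if w = u then y u else if w = v then y v else 0)).re ≤ 0 := by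
          apply hZ.2.2
          intro h
          apply hu
          have := congrFun h u
          simpa using this
        rw [q2]
        simpa using hoff
  · rw [EE_apply]
    have z2 : Qs {u,v} H x y = 0 := by
      unfold Qs
      apply if_neg
      intro h
      apply hbase
      intro w h1 h2
      exact h w (by simp [h1, h2])
    have zu : Qs {u} H x y = 0 := by
      unfold Qs
      apply if_neg
      intro h
      exact hbase (fun w h1 _ => h w (by simpa using h1))
    have zv : Qs {v} H x y = 0 := by
      unfold Qs
      apply if_neg
      intro h
      exact hbase (fun w _ h2 => h w (by simpa using h2))
    have z0 : Qs ∅ H x y = 0 := by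
      unfold Qs
      apply if_neg
      intro h
      exact hbase (fun w _ _ => h w (by simp))
    have kuv : Kc H u v x y = 0 := by
      unfold Kc
      exact if_neg (fun h => hbase h.1)
    have kvu : Kc H v u x y = 0 := by
      unfold Kc
      exact if_neg (fun h => hbase (fun w h1 h2 => h.1 w h2 h1))
    rw [z2, zu, zv, z0, kuv, kvu, ite_self]
    simp

lemma actsOn_zero (u v : Fin n) : ActsOn n u v 0 :=
  ⟨0, fun x y => by simp⟩

lemma actsOn_add {u v : Fin n} {M N : Mat n} (hM : ActsOn n u v M) (hN : ActsOn n u v N) :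
    ActsOn n u v (M + N) := by
  obtain ⟨A, hA⟩ := hM
  obtain ⟨B, hB⟩ := hN
  refine ⟨A + B, fun x y => ?_⟩
  rw [Matrix.add_apply, hA, hB]
  split_ifs with h
  · simp [Matrix.add_apply]
  · simp

lemma actsOn_sub {u v : Fin n} {M N : Mat n} (hM : ActsOn n u v M) (hN : ActsOn n u v N) :
    ActsOn n u v (M - N) := by
  obtain ⟨A, hA⟩ := hM
  obtain ⟨B, hB⟩ := hN
  refine ⟨A - B, fun x y => ?_⟩
  rw [Matrix.sub_apply, hA, hB]
  split_ifs with h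
  · simp [Matrix.sub_apply]
  · simp

lemma actsOn_Qs {u v : Fin n} (huv : u ≠ v) (s : Finset (Fin n)) (hs : s ⊆ {u,v}) (M : Mat n) :
    ActsOn n u v (Qs s M) := by
  refine ⟨fun p q => if (u ∈ s ∨ p.1 = q.1) ∧ (v ∈ s ∨ p.2 = q.2)
    then M (fun w => if w = u ∧ u ∈ s then p.1 else if w = v ∧ v ∈ s then p.2 else 0)
           (fun w => if w = u ∧ u ∈ s then q.1 else if w = v ∧ v ∈ s then q.2 else 0) else 0,
    fun x y => ?_⟩
  have hguard_iff : (∀ w, w ∉ s → x w = y w) ↔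
      ((∀ w, w ≠ u → w ≠ v → x w = y w) ∧ ((u ∈ s ∨ x u = y u) ∧ (v ∈ s ∨ x v = y v))) := by
    constructor
    · intro g
      refine ⟨?_, ?_, ?_⟩
      · intro w h1 h2
        apply g
        intro hws
        have := hs hws
        simp only [Finset.mem_insert, Finset.mem_singleton] at this
        rcases this with h | h
        · exact h1 h
        · exact h2 h
      · by_cases hus : u ∈ s
        · exact Or.inl hus
        · exact Or.inr (g u hus)
      · by_cases hvs : v ∈ s
        · exact Or.inl hvs
        · exact Or.inr (g v hvs)
    · rintro ⟨hb, hcu, hcv⟩ w hws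
      by_cases h1 : w = u
      · subst h1
        rcases hcu with h | h
        · exact absurd h hws
        · exact h
      · by_cases h2 : w = v
        · subst h2
          rcases hcv with h | h
          · exact absurd h hws
          · exact h
        · exact hb w h1 h2
  have hpx : ∀ z : Fin n → Fin 2, (fun w => if w ∈ s then z w else 0)
      = (fun w => if w = u ∧ u ∈ s then z u else if w = v ∧ v ∈ s then z v else 0) := by
    intro z
    funext w
    by_cases hws : w ∈ s
    · have hwuv := hs hws
      simp only [Finset.mem_insert, Finset.mem_singleton] at hwuv
      rcases hwuv with h | h
      · subst h
        simp [hws]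
      · subst h
        by_cases hwu : w = u
        · subst hwu
          simp [hws]
        · simp [hws, hwu]
    · by_cases h1 : w = u
      · subst h1
        by_cases h2 : w = v
        · exact absurd h2 huv
        · simp [hws, h2]
      · by_cases h2 : w = v
        · subst h2
          simp [hws, h1]
        · simp [hws, h1, h2]
  unfold Qs
  show _ = if (∀ w, w ≠ u → w ≠ v → x w = y w) then
      (if (u ∈ s ∨ x u = y u) ∧ (v ∈ s ∨ x v = y v)
        then M (fun w => if w = u ∧ u ∈ s then x u else if w = v ∧ v ∈ s then x v else 0)
               (fun w => if w = u ∧ u ∈ s then y u else if w = v ∧ v ∈ s then y v else 0)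
        else 0) else 0
  by_cases hbase : ∀ w, w ≠ u → w ≠ v → x w = y w
  · by_cases hc : (u ∈ s ∨ x u = y u) ∧ (v ∈ s ∨ x v = y v)
    · rw [if_pos (hguard_iff.mpr ⟨hbase, hc⟩), if_pos hbase, if_pos hc, hpx x, hpx y]
    · rw [if_neg (fun hg => hc (hguard_iff.mp hg).2), if_pos hbase, if_neg hc]
  · rw [if_neg (fun hg => hbase (hguard_iff.mp hg).1), if_neg hbase]

lemma actsOn_Kc1 {m : ℕ} (H : Mat (m+2)) (u v : Fin (m+2)) :
    ActsOn (m+2) u v (Kc H u v) := by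
  refine ⟨fun p q => if p.1 ≠ q.1 ∧ p.2 = q.2 then (corr H u v p.1 q.1 : ℂ) else 0,
    fun x y => ?_⟩
  unfold Kc
  show _ = if (∀ w, w ≠ u → w ≠ v → x w = y w) then
      (if x u ≠ y u ∧ x v = y v then (corr H u v (x u) (y u) : ℂ) else 0) else 0
  by_cases h1 : ∀ w, w ≠ u → w ≠ v → x w = y w
  · by_cases h2 : x u ≠ y u ∧ x v = y v
    · rw [if_pos ⟨h1, h2.1, h2.2⟩, if_pos h1, if_pos h2]
    · rw [if_neg (fun h => h2 ⟨h.2.1, h.2.2⟩), if_pos h1, if_neg h2]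
  · rw [if_neg (fun h => h1 h.1), if_neg h1]

lemma actsOn_Kc2 {m : ℕ} (H : Mat (m+2)) (u v : Fin (m+2)) :
    ActsOn (m+2) u v (Kc H v u) := by
  refine ⟨fun p q => if p.2 ≠ q.2 ∧ p.1 = q.1 then (corr H v u p.2 q.2 : ℂ) else 0,
    fun x y => ?_⟩
  unfold Kc
  show _ = if (∀ w, w ≠ u → w ≠ v → x w = y w) then
      (if x v ≠ y v ∧ x u = y u then (corr H v u (x v) (y v) : ℂ) else 0) else 0
  by_cases h1 : ∀ w, w ≠ u → w ≠ v → x w = y w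
  · have h1' : ∀ w, w ≠ v → w ≠ u → x w = y w := fun w a b => h1 w b a
    by_cases h2 : x v ≠ y v ∧ x u = y u
    · rw [if_pos ⟨h1', h2.1, h2.2⟩, if_pos h1, if_pos h2]
    · rw [if_neg (fun h => h2 ⟨h.2.1, h.2.2⟩), if_pos h1, if_neg h2]
  · rw [if_neg (fun h => h1 (fun w a b => h.1 w b a)), if_neg h1]

lemma actsOn_EE {m : ℕ} (H : Mat (m+2)) (u v : Fin (m+2)) (huv : u ≠ v) :
    ActsOn (m+2) u v (EE H u v) := by
  have hsu : ({u} : Finset (Fin (m+2))) ⊆ {u,v} := by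
    intro w hw
    simp only [Finset.mem_singleton] at hw
    simp [hw]
  have hsv : ({v} : Finset (Fin (m+2))) ⊆ {u,v} := by
    intro w hw
    simp only [Finset.mem_singleton] at hw
    simp [hw]
  have h4 : ActsOn (m+2) u v (Qs {u,v} H - Qs {u} H - Qs {v} H + Qs ∅ H) :=
    actsOn_add (actsOn_sub (actsOn_sub (actsOn_Qs huv _ (Finset.Subset.refl _) H) (actsOn_Qs huv _ hsu H))
      (actsOn_Qs huv _ hsv H)) (actsOn_Qs huv _ (Finset.empty_subset _) H)
  have hDP : ActsOn (m+2) u v (DP H u v) := by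
    unfold DP
    apply actsOn_add
    apply actsOn_add h4
    · by_cases hu0 : u = 0
      · rw [if_pos hu0]
        exact actsOn_sub (actsOn_Qs huv _ hsv H) (actsOn_Qs huv _ (Finset.empty_subset _) H)
      · rw [if_neg hu0]
        exact actsOn_zero u v
    · by_cases h01 : u = 0 ∧ v = 1
      · rw [if_pos h01]
        exact actsOn_Qs huv _ hsu H
      · rw [if_neg h01]
        exact actsOn_zero u v
  exact actsOn_add (actsOn_add hDP (actsOn_Kc1 H u v)) (actsOn_Kc2 H u v)

lemma actsOn_Dfin {m : ℕ} (H : Mat (m+2)) (u v : Fin (m+2)) (huv : u ≠ v) :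
    ActsOn (m+2) u v (Dfin H u v) := by
  obtain ⟨A, hA⟩ := actsOn_EE H u v huv
  refine ⟨fun p q => ((((A p q).re + (A q p).re) / 2 : ℝ) : ℂ), fun x y => ?_⟩
  show ((((EE H u v x y).re + (EE H u v y x).re) / 2 : ℝ) : ℂ) = _
  rw [hA x y, hA y x]
  show _ = if (∀ w, w ≠ u → w ≠ v → x w = y w) then
      ((((A (x u, x v) (y u, y v)).re + (A (y u, y v) (x u, x v)).re) / 2 : ℝ) : ℂ) else 0
  by_cases h : ∀ w, w ≠ u → w ≠ v → x w = y w
  · have h' : ∀ w, w ≠ u → w ≠ v → y w = x w := fun w a b => (h w a b).symm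
    rw [if_pos h, if_pos h', if_pos h]
  · have h' : ¬∀ w, w ≠ u → w ≠ v → y w = x w := fun hh => h (fun w a b => (hh w a b).symm)
    rw [if_neg h, if_neg h', if_neg h]
    simp

lemma one_ne_zero' {m : ℕ} : (1 : Fin (m+2)) ≠ 0 := by
  intro h
  have := congrArg Fin.val h
  simp [Fin.val_one, Fin.val_zero] at this

lemma zero_lt_one' {m : ℕ} : (0 : Fin (m+2)) < 1 := by
  rw [Fin.lt_def]
  simp [Fin.val_one, Fin.val_zero]

lemma Kc_row_zero {m : ℕ} (H : Mat (m+2)) (u : Fin (m+2)) (x y : Fin (m+2) → Fin 2) :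
    ∑ v : Fin (m+2), Kc H u v x y = 0 := by
  have hw0 : w0 u ≠ u := by
    unfold w0
    by_cases h : u = 0
    · rw [if_pos h, h]
      exact one_ne_zero'
    · rw [if_neg h]
      exact fun heq => h heq.symm
  by_cases hP : (∀ w, w ≠ u → x w = y w) ∧ x u ≠ y u
  · have hval : ∀ v : Fin (m+2), Kc H u v x y
        = if v = u then 0 else ((corr H u v (x u) (y u) : ℝ) : ℂ) := by
      intro v
      by_cases hvu : v = u
      · rw [if_pos hvu]
        unfold Kc
        apply if_neg
        rintro ⟨-, h2, h3⟩
        rw [hvu] at h3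
        exact h2 h3
      · rw [if_neg hvu]
        unfold Kc
        exact if_pos ⟨fun w h1 _ => hP.1 w h1, hP.2, hP.1 v hvu⟩
    rw [Finset.sum_congr rfl (fun v _ => hval v)]
    rw [← Finset.sum_erase (f := fun v => if v = u then (0:ℂ)
      else ((corr H u v (x u) (y u) : ℝ) : ℂ)) (a := u) Finset.univ (by simp)]
    rw [Finset.sum_congr rfl (fun v hv => if_neg (Finset.mem_erase.mp hv).1)]
    rw [← Complex.ofReal_sum]
    norm_cast
    unfold corr
    rw [Finset.sum_add_distrib]
    have h1 : (∑ v ∈ Finset.univ.erase u, if v = w0 u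
        then (∑ w ∈ Finset.univ.erase u, (mv H u w (x u) (y u) - c0 H u (x u) (y u))) else 0)
        = ∑ w ∈ Finset.univ.erase u, (mv H u w (x u) (y u) - c0 H u (x u) (y u)) := by
      rw [Finset.sum_ite_eq' (Finset.univ.erase u) (w0 u)]
      rw [if_pos (Finset.mem_erase.mpr ⟨hw0, Finset.mem_univ _⟩)]
    rw [h1]
    have h2 : (∑ v ∈ Finset.univ.erase u, (c0 H u (x u) (y u) - mv H u v (x u) (y u)))
        = - ∑ w ∈ Finset.univ.erase u, (mv H u w (x u) (y u) - c0 H u (x u) (y u)) := by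
      rw [← Finset.sum_neg_distrib]
      exact Finset.sum_congr rfl (fun v _ => by ring)
    rw [h2]
    ring
  · apply Finset.sum_eq_zero
    intro v _
    unfold Kc
    apply if_neg
    rintro ⟨h1, h2, h3⟩
    apply hP
    refine ⟨fun w hw => ?_, h2⟩
    by_cases hwv : w = v
    · rw [hwv]; exact h3
    · exact h1 w hw hwv

lemma Ksum_zero {m : ℕ} (H : Mat (m+2)) (x y : Fin (m+2) → Fin 2) :
    (∑ u : Fin (m+2), ∑ v ∈ Finset.univ.filter (fun v => u < v),
      (Kc H u v x y + Kc H v u x y)) = 0 := by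
  have hKuu : ∀ u : Fin (m+2), Kc H u u x y = 0 := fun u => by
    unfold Kc
    exact if_neg (fun h => h.2.1 h.2.2)
  have hA : ∀ u v : Fin (m+2), (if u < v then Kc H u v x y else 0)
      + (if v < u then Kc H u v x y else 0) = Kc H u v x y := by
    intro u v
    rcases lt_trichotomy u v with h|h|h
    · rw [if_pos h, if_neg (asymm h), add_zero]
    · subst h
      simp [lt_irrefl, hKuu u]
    · rw [if_neg (asymm h), if_pos h, zero_add]
  simp only [Finset.sum_add_distrib]
  have e1 : (∑ u : Fin (m+2), ∑ v ∈ Finset.univ.filter (fun v => u < v), Kc H u v x y)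
      = ∑ u : Fin (m+2), ∑ v : Fin (m+2), if u < v then Kc H u v x y else 0 :=
    Finset.sum_congr rfl (fun u _ => Finset.sum_filter _ _)
  have e2 : (∑ u : Fin (m+2), ∑ v ∈ Finset.univ.filter (fun v => u < v), Kc H v u x y)
      = ∑ u : Fin (m+2), ∑ v : Fin (m+2), if v < u then Kc H u v x y else 0 := by
    rw [Finset.sum_congr rfl (fun u (_ : u ∈ Finset.univ) => Finset.sum_filter
      (fun v => u < v) (fun v => Kc H v u x y))]
    exact Finset.sum_comm
  rw [e1, e2, ← Finset.sum_add_distrib]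
  rw [Finset.sum_congr rfl (fun u _ => ?_)]
  · exact Finset.sum_eq_zero (fun u _ => Kc_row_zero H u x y)
  · rw [← Finset.sum_add_distrib]
    exact Finset.sum_congr rfl (fun v _ => hA u v)

lemma sum_DP {m : ℕ} {D : Fin (m+2) → Fin (m+2) → Mat (m+2)}
    (hD : ∀ p q, ActsOn (m+2) p q (D p q)) (H : Mat (m+2))
    (hdec : H = ∑ p : Fin (m+2), ∑ q ∈ Finset.univ.filter (fun q => p < q), D p q)
    (x y : Fin (m+2) → Fin 2) :
    (∑ u : Fin (m+2), ∑ v ∈ Finset.univ.filter (fun v => u < v), DP H u v x y) = H x y := by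
  have hmob := mobius hD H hdec x y
  have hDPa : ∀ u v : Fin (m+2), DP H u v x y
      = (Qs {u,v} H x y - Qs {u} H x y - Qs {v} H x y + Qs ∅ H x y)
        + ((if u = 0 then Qs {v} H x y - Qs ∅ H x y else 0)
          + (if u = 0 ∧ v = 1 then Qs {u} H x y else 0)) := by
    intro u v
    simp only [DP, Matrix.add_apply, Matrix.sub_apply,
      apply_ite (fun N : Mat (m+2) => N x y), Matrix.zero_apply]
    ring
  rw [Finset.sum_congr rfl (fun u _ => Finset.sum_congr rfl (fun v _ => hDPa u v))]
  simp only [Finset.sum_add_distrib]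
  have h2 : (∑ u : Fin (m+2), ∑ v ∈ Finset.univ.filter (fun v => u < v),
      (if u = 0 then Qs {v} H x y - Qs ∅ H x y else 0))
      = ∑ v ∈ Finset.univ.filter (fun v => (0 : Fin (m+2)) < v),
          (Qs {v} H x y - Qs ∅ H x y) := by
    have hpull : ∀ u : Fin (m+2), (∑ v ∈ Finset.univ.filter (fun v => u < v),
        (if u = 0 then Qs {v} H x y - Qs ∅ H x y else 0))
        = if u = 0 then (∑ v ∈ Finset.univ.filter (fun v => u < v),
            (Qs {v} H x y - Qs ∅ H x y)) else 0 := by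
      intro u
      split_ifs with h <;> simp
    rw [Finset.sum_congr rfl (fun u _ => hpull u), Finset.sum_ite_eq' Finset.univ (0 : Fin (m+2))]
    simp
  have h3 : (∑ u : Fin (m+2), ∑ v ∈ Finset.univ.filter (fun v => u < v),
      (if u = 0 ∧ v = 1 then Qs {u} H x y else 0))
      = Qs {(0 : Fin (m+2))} H x y := by
    have hpull : ∀ u : Fin (m+2), (∑ v ∈ Finset.univ.filter (fun v => u < v),
        (if u = 0 ∧ v = 1 then Qs {u} H x y else 0))
        = if u = 0 then Qs {(0 : Fin (m+2))} H x y else 0 := by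
      intro u
      by_cases h : u = 0
      · subst h
        rw [if_pos rfl]
        have : ∀ v ∈ Finset.univ.filter (fun v => (0 : Fin (m+2)) < v),
            (if (0 : Fin (m+2)) = 0 ∧ v = 1 then Qs {(0 : Fin (m+2))} H x y else 0)
            = if v = 1 then Qs {(0 : Fin (m+2))} H x y else 0 := by
          intro v _
          by_cases hv : v = 1 <;> simp [hv]
        rw [Finset.sum_congr rfl this, Finset.sum_ite_eq' _ (1 : Fin (m+2))]
        rw [if_pos (Finset.mem_filter.mpr ⟨Finset.mem_univ _, zero_lt_one'⟩)]
      · rw [if_neg h]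
        apply Finset.sum_eq_zero
        intro v _
        simp [h]
    rw [Finset.sum_congr rfl (fun u _ => hpull u), Finset.sum_ite_eq' Finset.univ (0 : Fin (m+2))]
    simp
  have hfilt0 : Finset.univ.filter (fun v => (0 : Fin (m+2)) < v) = Finset.univ.erase 0 := by
    ext w
    simp [Finset.mem_filter, Finset.mem_erase, Fin.pos_iff_ne_zero]
  rw [h2, h3, hfilt0, Finset.sum_erase_eq_sub (Finset.mem_univ (0 : Fin (m+2)))]
  simp only [Finset.sum_add_distrib] at hmob
  linear_combination hmob

lemma sum_EE {m : ℕ} {D : Fin (m+2) → Fin (m+2) → Mat (m+2)}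
    (hD : ∀ p q, ActsOn (m+2) p q (D p q)) (H : Mat (m+2))
    (hdec : H = ∑ p : Fin (m+2), ∑ q ∈ Finset.univ.filter (fun q => p < q), D p q)
    (x y : Fin (m+2) → Fin 2) :
    (∑ u : Fin (m+2), ∑ v ∈ Finset.univ.filter (fun v => u < v), EE H u v x y) = H x y := by
  have hEa : ∀ u v : Fin (m+2), EE H u v x y
      = DP H u v x y + (Kc H u v x y + Kc H v u x y) := by
    intro u v
    simp only [EE, Matrix.add_apply]
    ring
  rw [Finset.sum_congr rfl (fun u _ => Finset.sum_congr rfl (fun v _ => hEa u v))]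
  have hK := Ksum_zero H x y
  simp only [Finset.sum_add_distrib] at hK ⊢
  rw [sum_DP hD H hdec x y]
  linear_combination hK

lemma sum_Dfin {m : ℕ} {D : Fin (m+2) → Fin (m+2) → Mat (m+2)}
    (hD : ∀ p q, ActsOn (m+2) p q (D p q)) (H : Mat (m+2))
    (hdec : H = ∑ p : Fin (m+2), ∑ q ∈ Finset.univ.filter (fun q => p < q), D p q)
    (hZ : IsSymZ H) :
    (∑ u : Fin (m+2), ∑ v ∈ Finset.univ.filter (fun v => u < v), Dfin H u v) = H := by
  have hreal : ∀ a b, ((H a b).re : ℂ) = H a b := fun a b =>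
    Complex.ext (Complex.ofReal_re _) (by rw [Complex.ofReal_im, hZ.2.1 a b])
  ext x y
  simp only [Matrix.sum_apply]
  have step1 : ∀ u : Fin (m+2), (∑ v ∈ Finset.univ.filter (fun v => u < v), Dfin H u v x y)
      = ((∑ v ∈ Finset.univ.filter (fun v => u < v),
          ((EE H u v x y).re + (EE H u v y x).re) / 2 : ℝ) : ℂ) :=
    fun u => (Complex.ofReal_sum _ _).symm
  rw [Finset.sum_congr rfl (fun u _ => step1 u), ← Complex.ofReal_sum]
  have hr : (∑ u : Fin (m+2), ∑ v ∈ Finset.univ.filter (fun v => u < v),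
      ((EE H u v x y).re + (EE H u v y x).re) / 2)
      = ((∑ u : Fin (m+2), ∑ v ∈ Finset.univ.filter (fun v => u < v), (EE H u v x y).re)
        + (∑ u : Fin (m+2), ∑ v ∈ Finset.univ.filter (fun v => u < v), (EE H u v y x).re)) / 2 := by
    simp only [← Finset.sum_div, Finset.sum_add_distrib]
  rw [hr]
  have hre1 : (∑ u : Fin (m+2), ∑ v ∈ Finset.univ.filter (fun v => u < v), (EE H u v x y).re)
      = (H x y).re := by
    rw [← sum_EE hD H hdec x y, Complex.re_sum]
    exact Finset.sum_congr rfl (fun u _ => (Complex.re_sum _ _).symm)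
  have hre2 : (∑ u : Fin (m+2), ∑ v ∈ Finset.univ.filter (fun v => u < v), (EE H u v y x).re)
      = (H y x).re := by
    rw [← sum_EE hD H hdec y x, Complex.re_sum]
    exact Finset.sum_congr rfl (fun u _ => (Complex.re_sum _ _).symm)
  rw [hre1, hre2]
  have hsym : H y x = H x y := by
    have := congrFun (congrFun hZ.1 x) y
    rw [← this]
    rfl
  rw [hsym]
  rw [show ((H x y).re + (H x y).re) / 2 = (H x y).re by ring]
  exact hreal x y

lemma isSymZ_Dfin {m : ℕ} {D : Fin (m+2) → Fin (m+2) → Mat (m+2)}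
    (hD : ∀ p q, ActsOn (m+2) p q (D p q)) (H : Mat (m+2))
    (hdec : H = ∑ p : Fin (m+2), ∑ q ∈ Finset.univ.filter (fun q => p < q), D p q)
    (hZ : IsSymZ H) (u v : Fin (m+2)) (huv : u < v) :
    IsSymZ (Dfin H u v) := by
  refine ⟨?_, ?_, ?_⟩
  · ext x y
    show Dfin H u v y x = Dfin H u v x y
    unfold Dfin
    rw [add_comm]
  · intro x y
    unfold Dfin
    simp
  · intro x y hxy
    unfold Dfin
    rw [Complex.ofReal_re]
    have h1 := Ere_nonpos hD H hdec hZ u v huv x y hxy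
    have h2 := Ere_nonpos hD H hdec hZ u v huv y x (Ne.symm hxy)
    linarith

lemma easy {n : ℕ} (H : Mat n) (D : Fin n → Fin n → Mat n)
    (hsz : ∀ u v, u < v → IsSymZ (D u v))
    (hdec : H = ∑ u : Fin n, ∑ v ∈ Finset.univ.filter (fun v => u < v), D u v) :
    IsSymZ H := by
  subst hdec
  refine ⟨?_, ?_, ?_⟩
  · simp only [Matrix.transpose_sum]
    exact Finset.sum_congr rfl (fun u _ => Finset.sum_congr rfl
      (fun v hv => (hsz u v (Finset.mem_filter.mp hv).2).1))
  · intro x y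
    simp only [Matrix.sum_apply]
    rw [Complex.im_sum]
    apply Finset.sum_eq_zero
    intro u _
    rw [Complex.im_sum]
    apply Finset.sum_eq_zero
    intro v hv
    exact (hsz u v (Finset.mem_filter.mp hv).2).2.1 x y
  · intro x y hxy
    simp only [Matrix.sum_apply]
    rw [Complex.re_sum]
    apply Finset.sum_nonpos
    intro u _
    rw [Complex.re_sum]
    apply Finset.sum_nonpos
    intro v hv
    exact (hsz u v (Finset.mem_filter.mp hv).2).2.2 x y hxy

end S12

/-- A two-local n-qubit Hamiltonian `H` is a symmetric Z-matrix in
the computational basis iff it has a decomposition `H = ∑_{u<v} D_{uv}` where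
each `D_{uv}` acts non-trivially only on qubits `u, v` and is itself a symmetric
Z-matrix. -/
theorem stmt12 (n : ℕ)
    (H : Matrix (Fin n → Fin 2) (Fin n → Fin 2) ℂ)
    (hherm : H.IsHermitian)
    (htwolocal : ∃ D : Fin n → Fin n → Matrix (Fin n → Fin 2) (Fin n → Fin 2) ℂ,
      (∀ u v, ActsOn n u v (D u v)) ∧
      H = ∑ u : Fin n, ∑ v ∈ Finset.univ.filter (fun v => u < v), D u v) :
    IsSymZ H ↔
      ∃ D : Fin n → Fin n → Matrix (Fin n → Fin 2) (Fin n → Fin 2) ℂ,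
        (∀ u v, ActsOn n u v (D u v)) ∧
        (∀ u v, u < v → IsSymZ (D u v)) ∧
        H = ∑ u : Fin n, ∑ v ∈ Finset.univ.filter (fun v => u < v), D u v := by
  obtain ⟨D0, hD0, hdec0⟩ := htwolocal
  constructor
  · intro hZ
    rcases Nat.lt_or_ge n 2 with hn | hn
    · have hnolt : ∀ u v : Fin n, ¬ u < v := by
        intro u v hlt
        have hu := u.isLt
        have hv := v.isLt
        have hlt' : u.val < v.val := hlt
        omega
      have hH0 : H = 0 := by
        rw [hdec0]
        apply Finset.sum_eq_zero
        intro u _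
        rw [Finset.filter_false_of_mem (fun v _ => hnolt u v), Finset.sum_empty]
      refine ⟨0, fun u v => ⟨0, fun x y => by simp⟩,
        fun u v _ => ⟨Matrix.transpose_zero, by simp, by simp⟩, ?_⟩
      rw [hH0]
      symm
      apply Finset.sum_eq_zero
      intro u _
      apply Finset.sum_eq_zero
      intro v _
      rfl
    · obtain ⟨m, rfl⟩ : ∃ m, n = m + 2 := ⟨n - 2, by omega⟩
      refine ⟨fun u v => if u < v then S12.Dfin H u v else 0, ?_, ?_, ?_⟩
      · intro u v
        show ActsOn (m+2) u v (if u < v then S12.Dfin H u v else 0)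
        by_cases huv : u < v
        · rw [if_pos huv]
          exact S12.actsOn_Dfin H u v (ne_of_lt huv)
        · rw [if_neg huv]
          exact S12.actsOn_zero u v
      · intro u v huv
        show IsSymZ (if u < v then S12.Dfin H u v else 0)
        rw [if_pos huv]
        exact S12.isSymZ_Dfin hD0 H hdec0 hZ u v huv
      · conv_lhs => rw [← S12.sum_Dfin hD0 H hdec0 hZ]
        exact Finset.sum_congr rfl (fun u _ => Finset.sum_congr rfl
          (fun v hv => (if_pos (Finset.mem_filter.mp hv).2).symm))
  · rintro ⟨D, hD, hsz, hdec⟩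
    exact S12.easy H D hsz hdec
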